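/- There exists a constant c > 0 such that the following holds for the (1+1) EA with one-bit prior noise probability p ≤ 1/2 on LeadingOnes: for every n and every current search point x with LO(x) ≥ 2n/3, the probability that the current search point after one generation has LeadingOnes value at most n/2 (a 'fallback') is at least c·p. -/

import Mathlib

open Finset ENNReal

/-- A search point: a bit string of length `n`. -/
abbrev Point (n : ℕ) := Fin n → Bool

/-- The LeadingOnes fitness: the length of the longest all-ones prefix. -/
def LO {n : ℕ} (x : Point n) : ℕ :=
  (Finset.univ.filter fun i : Fin n => ∀ j : Fin n, j ≤ i → x j = true).card

/-- The all-ones string, the unique global optimum of LeadingOnes. -/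
def allOnes (n : ℕ) : Point n := fun _ => true

/-- Probability that standard bit mutation (flip each bit independently with
probability `1/n`) turns `x` into `y`. -/
noncomputable def mutProb (n : ℕ) (x y : Point n) : ℝ :=
  (1 / n) ^ hammingDist x y * (1 - 1 / n) ^ (n - hammingDist x y)

/-- Probability that one-bit prior noise with probability `p` turns `x` into `u`:
with probability `1 - p` no noise occurs, otherwise one uniformly random bit flips. -/
noncomputable def oneBitNoise (n : ℕ) (p : ℝ) (x u : Point n) : ℝ :=
  (if u = x then 1 - p else 0) + (if hammingDist x u = 1 then p / n else 0)

/-- Probability that offspring `y` is accepted against parent `x`, i.e. that the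
noisy fitness of `y` is at least the noisy fitness of `x` (noise applied
independently to parent and offspring). -/
noncomputable def accProb (n : ℕ) (noise : Point n → Point n → ℝ)
    (f : Point n → ℝ) (x y : Point n) : ℝ :=
  ∑ u : Point n, ∑ v : Point n,
    noise x u * noise y v * (if f u ≤ f v then 1 else 0)

/-- One-generation transition probability of a (1+1)-type algorithm with mutation
kernel `mutK`, prior-noise kernel `noise` and fitness `f`: mutation creates an
offspring, which replaces the parent iff its noisy fitness is at least the
parent's noisy fitness. -/
noncomputable def step (n : ℕ) (mutK noise : Point n → Point n → ℝ)
    (f : Point n → ℝ) (x z : Point n) : ℝ :=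
  mutK x z * accProb n noise f x z
    + (if z = x then ∑ y : Point n, mutK x y * (1 - accProb n noise f x y) else 0)

/-- One-generation transition probability of the (1+1) EA with one-bit prior
noise probability `p` on LeadingOnes. -/
noncomputable def stepEA (n : ℕ) (p : ℝ) : Point n → Point n → ℝ :=
  step n (mutProb n) (oneBitNoise n p) fun x => (LO x : ℝ)

/-- Probability that a Markov chain with transition matrix `P` started in `x`
does not visit `opt` within the first `t` generations (time `0` included). -/
noncomputable def survive (n : ℕ) (P : Point n → Point n → ℝ) (opt : Point n) :
    ℕ → Point n → ℝ
  | 0, x => if x = opt then 0 else 1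
  | t + 1, x => if x = opt then 0 else ∑ y : Point n, P x y * survive n P opt t y

/-- Expected optimisation time, measured in fitness evaluations
(`evalsPerGen` evaluations per generation), of a Markov chain with transition
matrix `P` started from a uniformly random search point, until it first hits
`opt`; computed as `evalsPerGen · Σ_t P(T > t)`. -/
noncomputable def expectedTime (n : ℕ) (P : Point n → Point n → ℝ)
    (opt : Point n) (evalsPerGen : ℕ) : ℝ≥0∞ :=
  (evalsPerGen : ℝ≥0∞) * ∑' t : ℕ, ENNReal.ofReal
    ((Fintype.card (Point n) : ℝ)⁻¹ * ∑ x : Point n, survive n P opt t x)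

/-- Expected optimisation time (number of fitness evaluations, two per
generation) of the (1+1) EA with one-bit prior noise probability `p` on
LeadingOnes with problem size `n`, from a uniformly random initial search point. -/
noncomputable def EAtime (n : ℕ) (p : ℝ) : ℝ≥0∞ :=
  expectedTime n (stepEA n p) (allOnes n) 2

/-! Flipping a single bit `i < LO x` of `x` produces a point with LeadingOnes value exactly `i`;
standard bit mutation does exactly this with probability at least `1/(3n)`.
Such an offspring is accepted when the noise leaves it unchanged and instead flips one of the
first `i + 1` bits of the parent, which happens with probability at least `(i + 1) p (1 - p) / n`.
Summing over the roughly `n/8` positions `i` between `n/4` and `n/2` gives a fallback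
probability of at least `p / 192`. -/

lemma inv_three_le_one_sub_inv_pow (m : ℕ) :
    (3 : ℝ)⁻¹ ≤ (1 - ((m : ℝ) + 1)⁻¹) ^ m := by
  rcases m.eq_zero_or_pos with rfl | hm
  · norm_num
  have hbase : 1 - ((m : ℝ) + 1)⁻¹ = (1 + (m : ℝ)⁻¹)⁻¹ := by
    field_simp
    ring
  rw [hbase, inv_pow]
  have hexp : (1 + (m : ℝ)⁻¹) ^ m ≤ 3 :=
    Real.one_add_inv_pow_le_exp.trans (Real.exp_one_lt_d9.le.trans (by norm_num))
  exact inv_anti₀ (by positivity) hexp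

def flipBit {n : ℕ} (x : Point n) (i : Fin n) : Point n := Function.update x i (!x i)

section

variable {n : ℕ}

lemma flipBit_apply_self (x : Point n) (i : Fin n) : flipBit x i i = !x i :=
  Function.update_self _ _ _

lemma flipBit_apply_of_ne (x : Point n) {i j : Fin n} (h : j ≠ i) : flipBit x i j = x j :=
  Function.update_of_ne h _ _

lemma flipBit_ne_self (x : Point n) (i : Fin n) : flipBit x i ≠ x := fun h => by
  simpa [flipBit_apply_self] using congrFun h i

lemma flipBit_injective (x : Point n) : Function.Injective (flipBit x) := by
  intro i j h
  by_contra hij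
  simpa [flipBit_apply_self, flipBit_apply_of_ne x hij] using congrFun h i

lemma hammingDist_flipBit (x : Point n) (i : Fin n) : hammingDist x (flipBit x i) = 1 := by
  have : ({j | x j ≠ flipBit x i j} : Finset (Fin n)) = {i} := by
    ext j
    by_cases hj : j = i
    · simp [hj, flipBit_apply_self]
    · simp [hj, flipBit_apply_of_ne x hj]
  rw [hammingDist, this, Finset.card_singleton]

lemma LO_le_of_eq_false {x : Point n} {k : Fin n} (h : x k = false) : LO x ≤ k := by
  have hsub : univ.filter (fun i : Fin n => ∀ j : Fin n, j ≤ i → x j = true) ⊆ Iio k := by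
    intro i hi
    simp only [mem_filter, mem_univ, true_and] at hi
    rw [mem_Iio]
    by_contra! hki
    simp [hi k hki] at h
  simpa [LO, Fin.card_Iio] using card_le_card hsub

lemma le_LO_of_forall_lt {x : Point n} {m : ℕ} (hm : m ≤ n)
    (h : ∀ j : Fin n, (j : ℕ) < m → x j = true) : m ≤ LO x := by
  have hlt : ∀ a ∈ range m, a < n := fun a ha => (mem_range.mp ha).trans_le hm
  have hsub : (range m).attachFin hlt ⊆
      univ.filter (fun i : Fin n => ∀ j : Fin n, j ≤ i → x j = true) := by
    intro i hi
    rw [mem_attachFin, mem_range] at hi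
    simp only [mem_filter, mem_univ, true_and]
    exact fun j hj => h j ((Fin.le_def.mp hj).trans_lt hi)
  simpa [LO] using card_le_card hsub

lemma eq_true_of_lt_LO {x : Point n} {k : Fin n} (h : (k : ℕ) < LO x) : x k = true := by
  by_contra hk
  have := LO_le_of_eq_false (Bool.eq_false_iff.mpr hk)
  omega

lemma LO_flipBit_le {x : Point n} {i : Fin n} (h : (i : ℕ) < LO x) : LO (flipBit x i) ≤ i :=
  LO_le_of_eq_false (by rw [flipBit_apply_self, eq_true_of_lt_LO h]; rfl)

lemma le_LO_flipBit {x : Point n} {i : Fin n} (h : (i : ℕ) < LO x) :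
    (i : ℕ) ≤ LO (flipBit x i) := by
  refine le_LO_of_forall_lt i.isLt.le fun j hj => ?_
  rw [flipBit_apply_of_ne x (Fin.ne_of_lt hj)]
  exact eq_true_of_lt_LO (hj.trans h)

lemma mutProb_flipBit (x : Point n) (i : Fin n) :
    mutProb n x (flipBit x i) = (n : ℝ)⁻¹ * (1 - (n : ℝ)⁻¹) ^ (n - 1) := by
  rw [mutProb, hammingDist_flipBit, pow_one, one_div]

lemma inv_three_mul_le_mutProb_flipBit (x : Point n) (i : Fin n) :
    (3 * (n : ℝ))⁻¹ ≤ mutProb n x (flipBit x i) := by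
  obtain ⟨m, rfl⟩ : ∃ m, n = m + 1 := Nat.exists_eq_add_one.mpr i.pos
  rw [mutProb_flipBit, mul_inv, mul_comm (3 : ℝ)⁻¹, Nat.add_sub_cancel, Nat.cast_succ]
  exact mul_le_mul_of_nonneg_left (inv_three_le_one_sub_inv_pow m) (by positivity)

lemma mutProb_nonneg (x y : Point n) : 0 ≤ mutProb n x y := by
  have := Nat.cast_inv_le_one (α := ℝ) n
  rw [mutProb, one_div]
  exact mul_nonneg (by positivity) (pow_nonneg (by linarith) _)

lemma oneBitNoise_nonneg {p : ℝ} (hp0 : 0 ≤ p) (hp1 : p ≤ 1) (x u : Point n) :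
    0 ≤ oneBitNoise n p x u := by
  unfold oneBitNoise
  have : 0 ≤ p / n := by positivity
  apply add_nonneg <;> split_ifs <;> linarith

lemma oneBitNoise_self (p : ℝ) (x : Point n) : oneBitNoise n p x x = 1 - p := by
  simp [oneBitNoise]

lemma oneBitNoise_flipBit (p : ℝ) (x : Point n) (j : Fin n) :
    oneBitNoise n p x (flipBit x j) = p / n := by
  simp [oneBitNoise, flipBit_ne_self, hammingDist_flipBit]

variable {noise : Point n → Point n → ℝ} {f : Point n → ℝ}

lemma accProb_term_nonneg (hnoise : ∀ x u, 0 ≤ noise x u) (x y u v : Point n) :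
    0 ≤ noise x u * noise y v * (if f u ≤ f v then 1 else 0) := by
  have := hnoise x u
  have := hnoise y v
  positivity

lemma accProb_nonneg (hnoise : ∀ x u, 0 ≤ noise x u) (x y : Point n) :
    0 ≤ accProb n noise f x y :=
  sum_nonneg fun u _ => sum_nonneg fun v _ => accProb_term_nonneg hnoise x y u v

lemma sum_mul_le_accProb (hnoise : ∀ x u, 0 ≤ noise x u) {x y v : Point n}
    (s : Finset (Point n)) (hs : ∀ u ∈ s, f u ≤ f v) :
    ∑ u ∈ s, noise x u * noise y v ≤ accProb n noise f x y := calc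
  ∑ u ∈ s, noise x u * noise y v
      = ∑ u ∈ s, noise x u * noise y v * (if f u ≤ f v then 1 else 0) :=
        sum_congr rfl fun u hu => by rw [if_pos (hs u hu), mul_one]
  _ ≤ ∑ u ∈ s, ∑ v, noise x u * noise y v * (if f u ≤ f v then 1 else 0) :=
        sum_le_sum fun u _ =>
          single_le_sum (fun v _ => accProb_term_nonneg hnoise x y u v) (mem_univ v)
  _ ≤ accProb n noise f x y :=
        sum_le_sum_of_subset_of_nonneg (subset_univ s) fun u _ _ =>
          sum_nonneg fun v _ => accProb_term_nonneg hnoise x y u v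

lemma step_of_ne {mutK : Point n → Point n → ℝ} {x z : Point n} (h : z ≠ x) :
    step n mutK noise f x z = mutK x z * accProb n noise f x z := by
  rw [step, if_neg h, add_zero]

lemma stepEA_nonneg_of_ne {p : ℝ} (hp0 : 0 ≤ p) (hp1 : p ≤ 1) {x z : Point n} (h : z ≠ x) :
    0 ≤ stepEA n p x z := by
  rw [stepEA, step_of_ne h]
  exact mul_nonneg (mutProb_nonneg x z) (accProb_nonneg (oneBitNoise_nonneg hp0 hp1) x z)

lemma accProb_flipBit_ge {p : ℝ} (hp0 : 0 ≤ p) (hp1 : p ≤ 1) {x : Point n} {i : Fin n}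
    (hi : (i : ℕ) < LO x) :
    ((i : ℝ) + 1) * (p / n * (1 - p)) ≤
      accProb n (oneBitNoise n p) (fun y => (LO y : ℝ)) x (flipBit x i) := by
  have hbeats : ∀ u ∈ (Iic i).image (flipBit x), (LO u : ℝ) ≤ LO (flipBit x i) := by
    simp only [mem_image, mem_Iic, forall_exists_index, and_imp, forall_apply_eq_imp_iff₂]
    intro j hj
    have := (LO_flipBit_le ((Fin.le_def.mp hj).trans_lt hi)).trans
      ((Fin.le_def.mp hj).trans (le_LO_flipBit hi))
    exact_mod_cast this
  refine le_trans (le_of_eq ?_) (sum_mul_le_accProb (oneBitNoise_nonneg hp0 hp1) _ hbeats)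
  rw [sum_image fun a _ b _ h => flipBit_injective x h]
  simp [oneBitNoise_flipBit, oneBitNoise_self, Fin.card_Iic]

lemma stepEA_flipBit_ge {p : ℝ} (hp0 : 0 ≤ p) (hp2 : p ≤ 1 / 2) {x : Point n} {i : Fin n}
    (hi : (i : ℕ) < LO x) (hin : n ≤ 4 * (i : ℕ) + 4) :
    p / (24 * n) ≤ stepEA n p x (flipBit x i) := by
  have hn : (0 : ℝ) < n := by exact_mod_cast i.pos
  have hacc : p / 8 ≤ ((i : ℝ) + 1) * (p / n * (1 - p)) := by
    have hquarter : (1 : ℝ) / 4 ≤ ((i : ℝ) + 1) / n := by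
      rw [div_le_div_iff₀ (by norm_num) hn, one_mul]
      exact_mod_cast (by omega : n ≤ ((i : ℕ) + 1) * 4)
    calc p / 8 = 1 / 4 * (p * (1 / 2)) := by ring
      _ ≤ ((i : ℝ) + 1) / n * (p * (1 - p)) := by gcongr; linarith
      _ = _ := by ring
  rw [stepEA, step_of_ne (flipBit_ne_self x i)]
  calc p / (24 * n) = (3 * (n : ℝ))⁻¹ * (p / 8) := by field_simp; ring
    _ ≤ _ := mul_le_mul (inv_three_mul_le_mutProb_flipBit x i)
      (hacc.trans (accProb_flipBit_ge hp0 (by linarith) hi)) (by positivity)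
      (mutProb_nonneg _ _)

lemma sum_stepEA_flipBit_le {p : ℝ} (hp0 : 0 ≤ p) (hp1 : p ≤ 1) {x : Point n}
    {S : Finset (Fin n)} {T : Finset (Point n)} (hxT : x ∉ T)
    (hST : ∀ i ∈ S, flipBit x i ∈ T) :
    ∑ i ∈ S, stepEA n p x (flipBit x i) ≤ ∑ z ∈ T, stepEA n p x z := by
  rw [← sum_image fun a _ b _ h => flipBit_injective x h]
  refine sum_le_sum_of_subset_of_nonneg (by simpa [image_subset_iff] using hST) fun z hz _ => ?_
  exact stepEA_nonneg_of_ne hp0 hp1 fun h => hxT (h ▸ hz)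


lemma stepEA_zero (p : ℝ) (x y : Point 0) : stepEA 0 p x y = 1 := by
  obtain rfl := Subsingleton.elim y x
  rw [stepEA, step, if_pos rfl, Fintype.sum_subsingleton _ y]
  simp [mutProb]

end

/-- **Lemma (probability of a fallback).**
There exists a constant `c > 0` such that for the (1+1) EA with one-bit prior
noise probability `p ≤ 1/2` on LeadingOnes: for every `n` and every current
search point `x` with `LO(x) ≥ 2n/3`, the probability that the next current
search point has LeadingOnes value at most `n/2` (a "fallback") is at least `c·p`. -/
theorem EA_LeadingOnes_fallback :
    ∃ c : ℝ, 0 < c ∧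
      ∀ n : ℕ, ∀ p : ℝ, 0 ≤ p → p ≤ 1 / 2 → ∀ x : Point n,
        2 * (n : ℝ) / 3 ≤ (LO x : ℝ) →
        c * p ≤ ∑ z ∈ Finset.univ.filter
            (fun z : Point n => (LO z : ℝ) ≤ (n : ℝ) / 2),
          stepEA n p x z := by
  refine ⟨1 / 192, by norm_num, fun n p hp0 hp2 x hx => ?_⟩
  rcases n.eq_zero_or_pos with rfl | hn
  · calc 1 / 192 * p ≤ stepEA 0 p x x := by rw [stepEA_zero]; linarith
      _ ≤ _ := single_le_sum (fun z _ => by rw [stepEA_zero]; exact zero_le_one)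
        (mem_filter.mpr ⟨mem_univ x, by simp [LO]⟩)
  have hmid : ∀ m ∈ Icc ((n - 1) / 4) (n / 2), m < n := fun m hm => by
    rw [mem_Icc] at hm; omega
  set S := (Icc ((n - 1) / 4) (n / 2)).attachFin hmid
  have hS : ∀ i ∈ S, ((i : ℕ) : ℝ) ≤ n / 2 ∧ n ≤ 4 * (i : ℕ) + 4 := fun i hi => by
    rw [mem_attachFin, mem_Icc] at hi
    refine ⟨?_, by omega⟩
    have : (2 * (i : ℕ) : ℝ) ≤ n := by exact_mod_cast (by omega : 2 * (i : ℕ) ≤ n)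
    linarith
  have hlt : (n : ℝ) / 2 < LO x := by linarith [(by exact_mod_cast hn : (0 : ℝ) < n)]
  have hlt_LO : ∀ i ∈ S, (i : ℕ) < LO x := fun i hi => by
    exact_mod_cast (hS i hi).1.trans_lt hlt
  have hcard : (n : ℝ) ≤ 8 * #S := by
    exact_mod_cast (by simp only [S, card_attachFin, Nat.card_Icc]; omega : n ≤ 8 * #S)
  calc 1 / 192 * p ≤ #S * (p / (24 * n)) := by
        rw [mul_div_assoc', le_div_iff₀ (by positivity)]
        nlinarith
    _ ≤ ∑ i ∈ S, stepEA n p x (flipBit x i) := by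
        rw [← nsmul_eq_mul, ← sum_const]
        exact sum_le_sum fun i hi => stepEA_flipBit_ge hp0 hp2 (hlt_LO i hi) (hS i hi).2
    _ ≤ _ := by
        refine sum_stepEA_flipBit_le hp0 (by linarith) (by simpa using hlt) fun i hi => ?_
        rw [mem_filter]
        refine ⟨mem_univ _, le_trans ?_ (hS i hi).1⟩
        exact_mod_cast LO_flipBit_le (hlt_LO i hi)
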